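/- Let M be the N×N upper-triangular matrix with diagonal entries M_{ii} = ℓ_i and off-diagonal entries M_{ij} = -θ for i < j (and 0 for i > j). Then for every m ≥ 0, the quantity 𝟙ᵀ M^m 𝟙 (where 𝟙 is the all-ones column vector) equals ∑_{k=1}^{min(m+1,N)} (-θ)^{k-1} h^{(k)}_{m+1-k}(ℓ₁,…,ℓ_N), where h^{(k)}_d is the sum over all k-element subsets S of {1,…,N} of the complete homogeneous symmetric polynomial h_d in the variables (ℓ_i)_{i∈S}, with h_d = 0 for d < 0. -/
import Mathlib


/-- `h_d` (complete homogeneous, degree `d`, `= 0` for `d < 0`) in the variables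
`x i` for `i` in the finset `s`. -/
noncomputable def hSubset {R : Type*} [CommRing R] {N : ℕ} (x : Fin N → R)
    (s : Finset (Fin N)) (d : ℤ) : R :=
  if 0 ≤ d then ∑ μ ∈ s.sym d.toNat, (Multiset.map x μ.1).prod else 0

/-- `h^{(k)}_d(x) = ∑_{k-element subsets S} h_d(x_S)`. -/
noncomputable def hSym {R : Type*} [CommRing R] {N : ℕ} (x : Fin N → R) (k : ℕ) (d : ℤ) : R :=
  ∑ s ∈ Finset.univ.powersetCard k, hSubset x s d

section helpers
variable {R : Type*} [CommRing R] {N : ℕ} (x : Fin N → R)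

lemma hSubset_of_neg (s : Finset (Fin N)) {d : ℤ} (hd : d < 0) : hSubset x s d = 0 :=
  if_neg (not_le.2 hd)

lemma hSubset_zero (s : Finset (Fin N)) : hSubset x s 0 = 1 := by
  rw [hSubset, if_pos le_rfl]
  rw [show (0:ℤ).toNat = 0 from rfl, Finset.sym_zero, Finset.sum_singleton]
  rfl

lemma hSubset_empty (n : ℕ) : hSubset x (∅ : Finset (Fin N)) (n + 1 : ℕ) = 0 := by
  rw [hSubset, if_pos (by positivity)]
  rw [show ((n+1 : ℕ):ℤ).toNat = n + 1 by omega, Finset.sym_empty]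
  simp

lemma sym_split {s : Finset (Fin N)} {j : Fin N} (hj : j ∈ s) (n : ℕ) :
    ∑ μ ∈ s.sym (n+1), (Multiset.map x μ.1).prod
      = ∑ μ ∈ (s.erase j).sym (n+1), (Multiset.map x μ.1).prod
        + x j * ∑ ν ∈ s.sym n, (Multiset.map x ν.1).prod := by
  classical
  rw [← Finset.sum_filter_add_sum_filter_not (s.sym (n+1)) (fun μ => j ∈ μ)]
  rw [add_comm]
  congr 1
  · congr 1
    ext μ
    simp only [Finset.mem_filter, Finset.mem_sym_iff, Finset.mem_erase]
    constructor
    · rintro ⟨h1, h2⟩ a ha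
      exact ⟨fun h => h2 (h ▸ ha), h1 a ha⟩
    · intro h
      exact ⟨fun a ha => (h a ha).2, fun hjμ => (h j hjμ).1 rfl⟩
  · rw [Finset.mul_sum]
    refine Finset.sum_bij' (fun μ hμ => μ.erase j (Finset.mem_filter.1 hμ).2)
      (fun ν _ => j ::ₛ ν) ?_ ?_ ?_ ?_ ?_
    · intro μ hμ
      rw [Finset.mem_sym_iff]
      intro a ha
      have ha' : a ∈ (μ : Sym (Fin N) (n+1)) := by
        have := Sym.coe_erase (s := μ) (a := j) (Finset.mem_filter.1 hμ).2
        have ham : a ∈ (μ.erase j (Finset.mem_filter.1 hμ).2 : Multiset (Fin N)) := ha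
        rw [this] at ham
        exact Multiset.mem_of_mem_erase ham
      exact Finset.mem_sym_iff.1 (Finset.mem_filter.1 hμ).1 a ha'
    · intro ν hν
      rw [Finset.mem_filter]
      refine ⟨Finset.mem_sym_iff.2 fun a ha => ?_, Sym.mem_cons_self j ν⟩
      rcases Sym.mem_cons.1 ha with h | h
      · exact h ▸ hj
      · exact Finset.mem_sym_iff.1 hν a h
    · intro μ hμ
      exact Sym.cons_erase _
    · intro ν hν
      exact Sym.erase_cons_head ν j _
    · intro μ hμ
      have hjm : j ∈ μ.1 := (Finset.mem_filter.1 hμ).2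
      have key : μ.1 = j ::ₘ μ.1.erase j := (Multiset.cons_erase hjm).symm
      rw [key, Multiset.map_cons, Multiset.prod_cons]
      rfl

lemma hSubset_rec {s : Finset (Fin N)} {j : Fin N} (hj : j ∈ s) (d : ℤ) :
    hSubset x s d = hSubset x (s.erase j) d + x j * hSubset x s (d - 1) := by
  rcases lt_trichotomy d 0 with hd | hd | hd
  · rw [hSubset_of_neg x _ hd, hSubset_of_neg x _ hd, hSubset_of_neg x _ (by omega), mul_zero,
      add_zero]
  · subst hd
    rw [hSubset_zero, hSubset_zero, hSubset_of_neg x _ (by omega), mul_zero, add_zero]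
  · obtain ⟨n, hn⟩ : ∃ n : ℕ, d = (n : ℤ) + 1 := ⟨(d - 1).toNat, by omega⟩
    subst hn
    rw [hSubset, hSubset, hSubset, if_pos (by omega), if_pos (by omega), if_pos (by omega)]
    rw [show ((n:ℤ) + 1).toNat = n + 1 by omega, show ((n:ℤ) + 1 - 1).toNat = n by omega]
    exact sym_split x hj n

def Aset {N : ℕ} (i j : Fin N) : Finset (Finset (Fin N)) :=
  (Finset.Icc i j).powerset.filter (fun s => i ∈ s ∧ j ∈ s)

/-- explicit formula for `(M^m) i j` -/
noncomputable def Fent (θ : R) (m : ℕ) (i j : Fin N) : R :=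
  ∑ s ∈ Aset i j, (-θ)^(s.card - 1) * hSubset x s ((m:ℤ) + 1 - s.card)

variable (θ : R)

lemma mem_Aset {i j : Fin N} {s : Finset (Fin N)} :
    s ∈ Aset i j ↔ s ⊆ Finset.Icc i j ∧ i ∈ s ∧ j ∈ s := by
  simp [Aset, and_assoc]

lemma Fent_of_lt {i j : Fin N} (h : j < i) (m : ℕ) : Fent x θ m i j = 0 := by
  rw [Fent]
  apply Finset.sum_eq_zero
  intro s hs
  rw [mem_Aset] at hs
  exact absurd (Finset.mem_Icc.1 (hs.1 hs.2.1)).2 (not_le.2 h)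

lemma Aset_self (i : Fin N) : Aset i i = {{i}} := by
  ext s
  rw [mem_Aset, Finset.mem_singleton, Finset.Icc_self]
  constructor
  · rintro ⟨hsub, hi, -⟩
    exact Finset.Subset.antisymm hsub (Finset.singleton_subset_iff.2 hi)
  · rintro rfl
    simp

lemma Fent_zero (i j : Fin N) : Fent x θ 0 i j = if i = j then 1 else 0 := by
  rcases eq_or_ne i j with rfl | hij
  · rw [if_pos rfl, Fent, Aset_self, Finset.sum_singleton]
    norm_num [hSubset, Sym.coe_replicate]
  · rw [if_neg hij, Fent]
    apply Finset.sum_eq_zero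
    intro s hs
    rw [mem_Aset] at hs
    have h2 : 2 ≤ s.card := by
      have : ({i, j} : Finset (Fin N)) ⊆ s := by
        intro a ha
        rcases Finset.mem_insert.1 ha with rfl | ha
        · exact hs.2.1
        · exact (Finset.mem_singleton.1 ha) ▸ hs.2.2
      calc 2 = ({i, j} : Finset (Fin N)).card := (Finset.card_pair hij).symm
        _ ≤ s.card := Finset.card_le_card this
    rw [hSubset_of_neg x s (by push_cast; omega), mul_zero]

lemma Fent_succ (m : ℕ) (i j : Fin N) :
    Fent x θ (m+1) i j = Fent x θ m i j * x j + (-θ) * ∑ k ∈ Finset.Iio j, Fent x θ m i k := by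
  classical
  rcases lt_trichotomy j i with hij | hij | hij
  · rw [Fent_of_lt x θ hij, Fent_of_lt x θ hij, zero_mul, zero_add]
    rw [Finset.sum_eq_zero, mul_zero]
    intro k hk
    exact Fent_of_lt x θ (lt_trans (Finset.mem_Iio.1 hk) hij) m
  all_goals (
    have expand : ∀ s ∈ Aset i j, (-θ)^(s.card-1) * hSubset x s (((m+1:ℕ):ℤ)+1-s.card)
        = (-θ)^(s.card-1) * hSubset x (s.erase j) (((m+1:ℕ):ℤ)+1-s.card)
          + ((-θ)^(s.card-1) * hSubset x s ((m:ℤ)+1-s.card)) * x j := by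
      intro s hs
      rw [hSubset_rec x (mem_Aset.1 hs).2.2,
        show ((m+1:ℕ):ℤ)+1-(s.card:ℤ)-1 = (m:ℤ)+1-s.card by push_cast; ring]
      ring
    have key : (Fent x θ (m+1) i j : R)
        = (∑ s ∈ Aset i j, (-θ)^(s.card-1) * hSubset x (s.erase j) (((m+1:ℕ):ℤ)+1-s.card))
          + Fent x θ m i j * x j := by
      rw [Fent, Finset.sum_congr rfl expand, Finset.sum_add_distrib, ← Finset.sum_mul]
      rfl
    rw [key, add_comm]
    congr 1
  )
  · -- j = i
    subst hij
    rw [Aset_self, Finset.sum_singleton]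
    have h1 : ({j} : Finset (Fin N)).erase j = ∅ := by simp
    have h2 : (((m+1:ℕ):ℤ)+1 - (({j} : Finset (Fin N)).card : ℤ)) = ((m+1 : ℕ) : ℤ) := by
      simp
    rw [h1, h2, hSubset_empty, mul_zero]
    rw [Finset.sum_eq_zero, mul_zero]
    intro k hk
    exact Fent_of_lt x θ (Finset.mem_Iio.1 hk) m
  · -- i < j
    have hmaps : ∀ s ∈ Aset i j,
        (if h : (s.erase j).Nonempty then (s.erase j).max' h else i) ∈ Finset.Iio j := by
      intro s hs
      obtain ⟨hsub, hi, hjs⟩ := mem_Aset.1 hs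
      have hne : (s.erase j).Nonempty := ⟨i, Finset.mem_erase.2 ⟨ne_of_lt hij, hi⟩⟩
      rw [dif_pos hne, Finset.mem_Iio]
      have hmem := Finset.max'_mem _ hne
      obtain ⟨hne', hmem'⟩ := Finset.mem_erase.1 hmem
      exact lt_of_le_of_ne (Finset.mem_Icc.1 (hsub hmem')).2 hne'
    rw [← Finset.sum_fiberwise_of_maps_to hmaps, Finset.mul_sum]
    refine Finset.sum_congr rfl fun k hk => ?_
    have hkj : k < j := Finset.mem_Iio.1 hk
    rw [Fent, Finset.mul_sum]
    refine Finset.sum_nbij' (fun s => s.erase j) (fun u => insert j u) ?_ ?_ ?_ ?_ ?_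
    · -- forward membership
      intro s hs
      obtain ⟨hs, hgs⟩ := Finset.mem_filter.1 hs
      obtain ⟨hsub, hi, hjs⟩ := mem_Aset.1 hs
      have hne : (s.erase j).Nonempty := ⟨i, Finset.mem_erase.2 ⟨ne_of_lt hij, hi⟩⟩
      rw [dif_pos hne] at hgs
      refine mem_Aset.2 ⟨?_, Finset.mem_erase.2 ⟨ne_of_lt hij, hi⟩, hgs ▸ Finset.max'_mem _ hne⟩
      intro a ha
      refine Finset.mem_Icc.2 ⟨(Finset.mem_Icc.1 (hsub (Finset.mem_erase.1 ha).2)).1, ?_⟩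
      exact hgs ▸ Finset.le_max' _ a ha
    · -- backward membership
      intro u hu
      obtain ⟨hsub, hi, hku⟩ := mem_Aset.1 hu
      have hik : i ≤ k := (Finset.mem_Icc.1 (hsub hi)).2
      have hjnu : j ∉ u := fun hju => absurd (Finset.mem_Icc.1 (hsub hju)).2 (not_le.2 hkj)
      refine Finset.mem_filter.2 ⟨mem_Aset.2 ⟨?_, Finset.mem_insert_of_mem hi,
        Finset.mem_insert_self j u⟩, ?_⟩
      · intro a ha
        rcases Finset.mem_insert.1 ha with rfl | ha
        · exact Finset.mem_Icc.2 ⟨le_of_lt hij, le_refl a⟩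
        · obtain ⟨h1, h2⟩ := Finset.mem_Icc.1 (hsub ha)
          exact Finset.mem_Icc.2 ⟨h1, le_trans h2 (le_of_lt hkj)⟩
      · rw [Finset.erase_insert hjnu]
        have hne : u.Nonempty := ⟨i, hi⟩
        rw [dif_pos hne]
        refine le_antisymm (Finset.max'_le _ _ _ fun a ha => (Finset.mem_Icc.1 (hsub ha)).2)
          (Finset.le_max' _ k hku)
    · -- left inverse
      intro s hs
      exact Finset.insert_erase (mem_Aset.1 (Finset.mem_filter.1 hs).1).2.2
    · -- right inverse
      intro u hu
      obtain ⟨hsub, hi, hku⟩ := mem_Aset.1 hu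
      have hjnu : j ∉ u := fun hju => absurd (Finset.mem_Icc.1 (hsub hju)).2 (not_le.2 hkj)
      exact Finset.erase_insert hjnu
    · -- terms
      intro s hs
      obtain ⟨hs', hgs⟩ := Finset.mem_filter.1 hs
      obtain ⟨hsub, hi, hjs⟩ := mem_Aset.1 hs'
      have hcard : s.card = (s.erase j).card + 1 := by
        rw [Finset.card_erase_of_mem hjs]
        have : 0 < s.card := Finset.card_pos.2 ⟨j, hjs⟩
        omega
      have hc1 : 1 ≤ (s.erase j).card :=
        Finset.card_pos.2 ⟨i, Finset.mem_erase.2 ⟨ne_of_lt hij, hi⟩⟩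
      rw [hcard]
      rw [show (s.erase j).card + 1 - 1 = ((s.erase j).card - 1) + 1 by omega,
        pow_succ,
        show ((m+1:ℕ):ℤ)+1 - (((s.erase j).card + 1 : ℕ):ℤ) = (m:ℤ)+1 - (s.erase j).card by
          push_cast; ring]
      ring

end helpers

/-- For the upper-triangular matrix `M` with `M_{ii} = ℓ_i`, `M_{ij} = -θ` for `i < j`:
`𝟙ᵀ M^m 𝟙 = ∑_{k=1}^{min(m+1,N)} (-θ)^{k-1} h^{(k)}_{m+1-k}(ℓ)`. -/
theorem matrix_power_eigenvalue_formula {R : Type*} [CommRing R] (N : ℕ) (hN : 0 < N)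
    (ℓ : Fin N → R) (θ : R) (M : Matrix (Fin N) (Fin N) R)
    (hM : ∀ i j : Fin N, M i j = if i = j then ℓ i else if i < j then -θ else 0)
    (m : ℕ) :
    ∑ i : Fin N, ∑ j : Fin N, (M ^ m) i j
      = ∑ k ∈ Finset.Icc 1 (min (m + 1) N),
          (-θ) ^ (k - 1) * hSym ℓ k ((m : ℤ) + 1 - (k : ℤ)) := by
  classical
  have entry : ∀ (m : ℕ) (i j : Fin N), (M ^ m) i j = Fent ℓ θ m i j := by
    intro m
    induction m with
    | zero =>
      intro i j
      rw [pow_zero, Fent_zero]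
      simp [Matrix.one_apply]
    | succ m ih =>
      intro i j
      rw [pow_succ, Matrix.mul_apply]
      have h0 : ∀ k ∈ Finset.univ, k ∉ insert j (Finset.Iio j) → (M ^ m) i k * M k j = 0 := by
        intro k _ hk
        simp only [Finset.mem_insert, Finset.mem_Iio] at hk
        push_neg at hk
        rw [hM, if_neg hk.1, if_neg (not_lt.2 hk.2), mul_zero]
      rw [← Finset.sum_subset (Finset.subset_univ _) h0, Finset.sum_insert (by simp)]
      rw [hM j j, if_pos rfl]
      rw [Finset.sum_congr rfl (fun k hk => by
        rw [hM k j, if_neg (ne_of_lt (Finset.mem_Iio.1 hk)), if_pos (Finset.mem_Iio.1 hk), ih])]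
      rw [ih, Fent_succ, ← Finset.sum_mul, mul_comm (∑ k ∈ Finset.Iio j, Fent ℓ θ m i k) (-θ)]
  have i0 : Fin N := ⟨0, hN⟩
  set gmin : Finset (Fin N) → Fin N := fun s => if h : s.Nonempty then s.min' h else i0 with hgmin
  set gmax : Finset (Fin N) → Fin N := fun s => if h : s.Nonempty then s.max' h else i0 with hgmax
  set S0 : Finset (Finset (Fin N)) := Finset.univ.filter (fun s => s.Nonempty) with hS0
  have stepA : ∑ i : Fin N, ∑ j : Fin N, Fent ℓ θ m i j
      = ∑ s ∈ S0, (-θ)^(s.card - 1) * hSubset ℓ s ((m:ℤ) + 1 - s.card) := by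
    rw [← Finset.sum_product']
    have hmaps : ∀ s ∈ S0, (gmin s, gmax s) ∈ (Finset.univ ×ˢ Finset.univ :
        Finset (Fin N × Fin N)) := fun s _ => Finset.mem_product.2 ⟨Finset.mem_univ _,
        Finset.mem_univ _⟩
    rw [← Finset.sum_fiberwise_of_maps_to hmaps]
    refine Finset.sum_congr rfl fun p _ => ?_
    have hfib : S0.filter (fun s => (gmin s, gmax s) = p) = Aset p.1 p.2 := by
      ext s
      rw [Finset.mem_filter, mem_Aset, hS0, Finset.mem_filter, Prod.ext_iff]
      constructor
      · rintro ⟨⟨-, hne⟩, h1, h2⟩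
        rw [hgmin] at h1; rw [hgmax] at h2
        simp only [dif_pos hne] at h1 h2
        refine ⟨fun a ha => Finset.mem_Icc.2 ⟨h1 ▸ Finset.min'_le s a ha,
          h2 ▸ Finset.le_max' s a ha⟩, h1 ▸ Finset.min'_mem s hne, h2 ▸ Finset.max'_mem s hne⟩
      · rintro ⟨hsub, hi, hj⟩
        have hne : s.Nonempty := ⟨p.1, hi⟩
        refine ⟨⟨Finset.mem_univ _, hne⟩, ?_, ?_⟩
        · rw [hgmin]
          simp only [dif_pos hne]
          exact le_antisymm (Finset.min'_le s p.1 hi)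
            (Finset.le_min' s hne p.1 fun a ha => (Finset.mem_Icc.1 (hsub ha)).1)
        · rw [hgmax]
          simp only [dif_pos hne]
          exact le_antisymm (Finset.max'_le s hne p.2 fun a ha => (Finset.mem_Icc.1 (hsub ha)).2)
            (Finset.le_max' s p.2 hj)
    rw [hfib]
    rfl
  have stepB : ∑ s ∈ S0, (-θ)^(s.card - 1) * hSubset ℓ s ((m:ℤ) + 1 - s.card)
      = ∑ k ∈ Finset.Icc 1 N, (-θ)^(k - 1) * hSym ℓ k ((m:ℤ) + 1 - (k:ℤ)) := by
    have hmaps : ∀ s ∈ S0, s.card ∈ Finset.Icc 1 N := by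
      intro s hs
      have hne : s.Nonempty := (Finset.mem_filter.1 hs).2
      refine Finset.mem_Icc.2 ⟨Finset.card_pos.2 hne, ?_⟩
      have := Finset.card_le_univ s
      simpa using this
    rw [← Finset.sum_fiberwise_of_maps_to hmaps]
    refine Finset.sum_congr rfl fun k hk => ?_
    have hk1 : 1 ≤ k := (Finset.mem_Icc.1 hk).1
    have hfib : S0.filter (fun s => s.card = k) = Finset.univ.powersetCard k := by
      ext s
      rw [Finset.mem_filter, hS0, Finset.mem_filter, Finset.mem_powersetCard_univ]
      constructor
      · rintro ⟨⟨-, -⟩, h⟩; exact h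
      · intro h
        exact ⟨⟨Finset.mem_univ _, Finset.card_pos.1 (h ▸ hk1)⟩, h⟩
    rw [hfib, hSym, Finset.mul_sum]
    refine Finset.sum_congr rfl fun s hs => ?_
    rw [Finset.mem_powersetCard_univ.1 hs]
  have stepC : ∑ k ∈ Finset.Icc 1 N, (-θ)^(k - 1) * hSym ℓ k ((m:ℤ) + 1 - (k:ℤ))
      = ∑ k ∈ Finset.Icc 1 (min (m + 1) N), (-θ)^(k - 1) * hSym ℓ k ((m:ℤ) + 1 - (k:ℤ)) := by
    refine (Finset.sum_subset (Finset.Icc_subset_Icc_right (min_le_right _ _)) ?_).symm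
    intro k hk hk'
    rw [Finset.mem_Icc] at hk
    rw [Finset.mem_Icc] at hk'
    have hkm : m + 1 < k := by omega
    have : hSym ℓ k ((m:ℤ) + 1 - (k:ℤ)) = 0 := by
      rw [hSym]
      refine Finset.sum_eq_zero fun s _ => ?_
      exact hSubset_of_neg ℓ s (by omega)
    rw [this, mul_zero]
  calc ∑ i : Fin N, ∑ j : Fin N, (M ^ m) i j
      = ∑ i : Fin N, ∑ j : Fin N, Fent ℓ θ m i j := by
        refine Finset.sum_congr rfl fun i _ => Finset.sum_congr rfl fun j _ => entry m i j
    _ = _ := by rw [stepA, stepB, stepC]
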